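/- Fix points x_1,\dots,x_L \in [0,1], weights c_j > 0 with \sum_{j=1}^L c_j = 1, vectors B_1,\dots,B_L \in \mathbb{R}^p, reals \mu_1,\dots,\mu_L, a continuously differentiable probability density f_\epsilon on \mathbb{R} with derivative f'_\epsilon, and a probability density f_U on \mathbb{R}. Assume all the integrals below are finite and the denominators are positive almost everywhere. Define, for (w,y) \in \mathbb{R}^2, D(w,y) = \sum_{j=1}^L f_\epsilon(y-\mu_j) f_U(w-x_j) c_j, the score S^*(w,y) = -\sum_{j=1}^L B_j f'_\epsilon(y-\mu_j) f_U(w-x_j) c_j / D(w,y), the L\times L matrices A with A_{ij} = \int\int [f_\epsilon(y-\mu_j) f_U(w-x_j) c_j / D(w,y)]\, f_\epsilon(y-\mu_i) f_U(w-x_i)\,dy\,dw and H with H_{ij} = -\int\int [f'_\epsilon(y-\mu_j) f_U(w-x_j) c_j / D(w,y)]\, f_\epsilon(y-\mu_i) f_U(w-x_i)\,dy\,dw. Suppose A is invertible, and define a_j = \sum_{k=1}^L B_k \sum_{m=1}^L H_{mk} (A^{-1})_{jm} \in \mathbb{R}^p and E^*\{a \mid y,w\} = \sum_{j=1}^L a_j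 f_\epsilon(y-\mu_j) f_U(w-x_j) c_j / D(w,y). Then for every i \in \{1,\dots,L\}: \int\int [S^*(w,y) - E^*\{a\mid y,w\}]\, f_\epsilon(y-\mu_i) f_U(w-x_i)\,dy\,dw = 0 \in \mathbb{R}^p. -/
import Mathlib


open MeasureTheory Real Set

/-- Correctness of the discretized integral-equation construction of Section 2.2:
the corrected score `S* - E*{a | Y, W}` has conditional mean zero given `X = xᵢ`
for every support point `xᵢ` of the discrete working density. -/
theorem corrected_score_conditional_mean_zero
    {L p : ℕ}
    (xs : Fin L → ℝ) (hxs : ∀ j, xs j ∈ Icc (0:ℝ) 1)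
    (c : Fin L → ℝ) (hc : ∀ j, 0 < c j) (hcsum : ∑ j, c j = 1)
    (Bv : Fin L → Fin p → ℝ) (μ : Fin L → ℝ)
    (feps : ℝ → ℝ) (hfeps : ContDiff ℝ 1 feps) (hfepsnn : ∀ t, 0 ≤ feps t)
    (hfepsint : ∫ t : ℝ, feps t = 1)
    (fU : ℝ → ℝ) (hfUnn : ∀ t, 0 ≤ fU t) (hfUint : ∫ t : ℝ, fU t = 1)
    -- the mixture denominator
    (D : ℝ → ℝ → ℝ)
    (hD : ∀ w y, D w y = ∑ j, feps (y - μ j) * fU (w - xs j) * c j)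
    (hDpos : ∀ᵐ wy : ℝ × ℝ, 0 < D wy.1 wy.2)
    -- the score
    (S : ℝ → ℝ → Fin p → ℝ)
    (hS : ∀ w y l, S w y l =
      -(∑ j, Bv j l * deriv feps (y - μ j) * fU (w - xs j) * c j) / D w y)
    -- the matrices A and H
    (A H : Matrix (Fin L) (Fin L) ℝ)
    (hA : ∀ i j, A i j = ∫ w : ℝ, ∫ y : ℝ,
      (feps (y - μ j) * fU (w - xs j) * c j / D w y) *
        (feps (y - μ i) * fU (w - xs i)))
    (hH : ∀ i j, H i j = -∫ w : ℝ, ∫ y : ℝ,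
      (deriv feps (y - μ j) * fU (w - xs j) * c j / D w y) *
        (feps (y - μ i) * fU (w - xs i)))
    (hAinv : IsUnit A.det)
    -- the solution a of the discretized integral equation
    (a : Fin L → Fin p → ℝ)
    (ha : ∀ j l, a j l = ∑ k, Bv k l * ∑ i, H i k * (A⁻¹) j i)
    -- its conditional expectation under the working model
    (Ea : ℝ → ℝ → Fin p → ℝ)
    (hEa : ∀ w y l, Ea w y l =
      (∑ j, a j l * feps (y - μ j) * fU (w - xs j) * c j) / D w y)
    -- integrability of all the integrands involved
    (hintA : ∀ i j, Integrable (fun wy : ℝ × ℝ =>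
      (feps (wy.2 - μ j) * fU (wy.1 - xs j) * c j / D wy.1 wy.2) *
        (feps (wy.2 - μ i) * fU (wy.1 - xs i))))
    (hintH : ∀ i j, Integrable (fun wy : ℝ × ℝ =>
      (deriv feps (wy.2 - μ j) * fU (wy.1 - xs j) * c j / D wy.1 wy.2) *
        (feps (wy.2 - μ i) * fU (wy.1 - xs i))))
    (hintC : ∀ i l, Integrable (fun wy : ℝ × ℝ =>
      (S wy.1 wy.2 l - Ea wy.1 wy.2 l) * (feps (wy.2 - μ i) * fU (wy.1 - xs i)))) :
    ∀ i : Fin L, ∀ l : Fin p,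
      (∫ w : ℝ, ∫ y : ℝ,
        (S w y l - Ea w y l) * (feps (y - μ i) * fU (w - xs i))) = 0 := by
  intro i l
  set FA : Fin L → ℝ × ℝ → ℝ := fun j wy =>
    (feps (wy.2 - μ j) * fU (wy.1 - xs j) * c j / D wy.1 wy.2) *
      (feps (wy.2 - μ i) * fU (wy.1 - xs i)) with hFA
  set FH : Fin L → ℝ × ℝ → ℝ := fun j wy =>
    (deriv feps (wy.2 - μ j) * fU (wy.1 - xs j) * c j / D wy.1 wy.2) *
      (feps (wy.2 - μ i) * fU (wy.1 - xs i)) with hFH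
  have hvol : (volume : Measure (ℝ × ℝ)) = (volume : Measure ℝ).prod volume :=
    Measure.volume_eq_prod ℝ ℝ
  have hprod : ∀ (f : ℝ × ℝ → ℝ), Integrable f →
      (∫ w : ℝ, ∫ y : ℝ, f (w, y)) = ∫ wy : ℝ × ℝ, f wy := by
    intro f hf
    rw [hvol] at hf ⊢
    exact MeasureTheory.integral_integral hf
  have hFAint : ∀ j, Integrable (FA j) := fun j => hintA i j
  have hFHint : ∀ j, Integrable (FH j) := fun j => hintH i j
  have hFAval : ∀ j, (∫ wy : ℝ × ℝ, FA j wy) = A i j := by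
    intro j
    rw [hA i j]
    exact (hprod (FA j) (hFAint j)).symm
  have hFHval : ∀ j, (∫ wy : ℝ × ℝ, FH j wy) = -H i j := by
    intro j
    rw [hH i j, neg_neg]
    exact (hprod (FH j) (hFHint j)).symm
  -- pointwise decomposition of the corrected score integrand
  have hpt : ∀ wy : ℝ × ℝ,
      (S wy.1 wy.2 l - Ea wy.1 wy.2 l) * (feps (wy.2 - μ i) * fU (wy.1 - xs i))
        = ∑ j, (Bv j l * (-(FH j wy)) - a j l * FA j wy) := by
    intro wy
    rw [hS, hEa, sub_mul, Finset.sum_sub_distrib]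
    congr 1
    · rw [neg_div, neg_mul, div_mul_eq_mul_div, Finset.sum_mul, Finset.sum_div,
        ← Finset.sum_neg_distrib]
      exact Finset.sum_congr rfl fun j _ => by simp only [hFH]; ring
    · rw [div_mul_eq_mul_div, Finset.sum_mul, Finset.sum_div]
      exact Finset.sum_congr rfl fun j _ => by simp only [hFA]; ring
  have hterm : ∀ j : Fin L, Integrable (fun wy => Bv j l * (-(FH j wy)) - a j l * FA j wy) :=
    fun j => (((hFHint j).neg).const_mul _).sub ((hFAint j).const_mul _)
  -- compute the product integral
  have hmain : (∫ wy : ℝ × ℝ,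
      (S wy.1 wy.2 l - Ea wy.1 wy.2 l) * (feps (wy.2 - μ i) * fU (wy.1 - xs i)))
      = ∑ j, (Bv j l * H i j - a j l * A i j) := by
    rw [show (fun wy : ℝ × ℝ =>
        (S wy.1 wy.2 l - Ea wy.1 wy.2 l) * (feps (wy.2 - μ i) * fU (wy.1 - xs i)))
        = fun wy => ∑ j, (Bv j l * (-(FH j wy)) - a j l * FA j wy) from funext hpt]
    rw [integral_finset_sum _ fun j _ => hterm j]
    refine Finset.sum_congr rfl fun j _ => ?_
    have hI1 : Integrable (fun wy : ℝ × ℝ => Bv j l * (-(FH j wy))) :=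
      ((hFHint j).neg).const_mul _
    have hI2 : Integrable (fun wy : ℝ × ℝ => a j l * FA j wy) :=
      (hFAint j).const_mul _
    rw [integral_sub hI1 hI2, integral_const_mul, integral_const_mul, integral_neg,
      hFAval j, hFHval j, neg_neg]
  -- the matrix identity A * A⁻¹ = 1 entrywise
  have hinv : ∀ m : Fin L, (∑ j, A i j * (A⁻¹) j m) = if i = m then 1 else 0 := by
    intro m
    have h1 : (A * A⁻¹) i m = (1 : Matrix (Fin L) (Fin L) ℝ) i m := by
      rw [Matrix.mul_nonsing_inv A hAinv]
    simpa [Matrix.mul_apply, Matrix.one_apply] using h1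
  -- the algebraic cancellation
  have halg : (∑ j, a j l * A i j) = ∑ k, Bv k l * H i k := by
    have step1 : (∑ j, a j l * A i j)
        = ∑ j, ∑ k, ∑ m, Bv k l * H m k * ((A⁻¹) j m * A i j) := by
      refine Finset.sum_congr rfl fun j _ => ?_
      rw [ha, Finset.sum_mul]
      refine Finset.sum_congr rfl fun k _ => ?_
      rw [Finset.mul_sum, Finset.sum_mul]
      exact Finset.sum_congr rfl fun m _ => by ring
    rw [step1, Finset.sum_comm]
    refine Finset.sum_congr rfl fun k _ => ?_
    rw [Finset.sum_comm]
    have h2 : (∑ m, ∑ j, Bv k l * H m k * ((A⁻¹) j m * A i j))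
        = ∑ m, Bv k l * (H m k * ∑ j, A i j * (A⁻¹) j m) := by
      refine Finset.sum_congr rfl fun m _ => ?_
      simp only [Finset.mul_sum]
      exact Finset.sum_congr rfl fun j _ => by ring
    rw [h2]
    simp only [hinv, mul_ite, mul_one, mul_zero]
    simp [Finset.sum_ite_eq]
  -- put everything together
  have hzero : (∑ j, (Bv j l * H i j - a j l * A i j)) = 0 := by
    rw [Finset.sum_sub_distrib, halg, sub_self]
  rw [hprod _ (hintC i l), hmain, hzero]
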